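/- arXiv:1809.08355 — 2 statements merged into one kernel-verified Lean document; each statement's English description precedes it below -/
import Mathlib

section
/- Let X : Primes → ℕ⁺ be any function assigning a positive integer to each prime, and let T = { n ≥ 2 : for every prime p dividing n, p^{X(p)} exactly divides n }. Then T contains no 3-term geometric progression (a, ar, ar²) with rational ratio r > 1 where all three terms are integers. -/
/-! Membership in `T` pins the `p`-adic valuation of each element to `0` or `X p`.
From `b² = ac` we get `2 v_p(b) = v_p(a) + v_p(c)`, and with all three valuations in `{0, X p}`
this forces `v_p(a) = v_p(b)` for every prime `p`, hence `a = b`. -/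

namespace Nat

theorem factorization_eq_of_pow_dvd_of_not_pow_succ_dvd {n p k : ℕ} (hp : p.Prime) (hn : n ≠ 0)
    (hk : p ^ k ∣ n) (hk1 : ¬ p ^ (k + 1) ∣ n) : n.factorization p = k := by
  have hle : k ≤ n.factorization p := (hp.pow_dvd_iff_le_factorization hn).mp hk
  have hlt : ¬ k + 1 ≤ n.factorization p := fun h =>
    hk1 ((hp.pow_dvd_iff_le_factorization hn).mpr h)
  omega

theorem factorization_eq_zero_or_eq_of_exact_pow {n p k : ℕ} (hp : p.Prime) (hn : n ≠ 0)
    (h : p ∣ n → p ^ k ∣ n ∧ ¬ p ^ (k + 1) ∣ n) :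
    n.factorization p = 0 ∨ n.factorization p = k := by
  by_cases hpn : p ∣ n
  · obtain ⟨hk, hk1⟩ := h hpn
    exact Or.inr (factorization_eq_of_pow_dvd_of_not_pow_succ_dvd hp hn hk hk1)
  · exact Or.inl (factorization_eq_zero_of_not_dvd hpn)

theorem factorization_eq_of_mul_self_eq_mul {a b c p k : ℕ}
    (ha : a ≠ 0) (hb : b ≠ 0) (hc : c ≠ 0) (h : b * b = a * c)
    (hpa : a.factorization p = 0 ∨ a.factorization p = k)
    (hpb : b.factorization p = 0 ∨ b.factorization p = k)
    (hpc : c.factorization p = 0 ∨ c.factorization p = k) :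
    a.factorization p = b.factorization p := by
  have hsum : b.factorization p + b.factorization p = a.factorization p + c.factorization p := by
    simpa [factorization_mul, ha, hb, hc] using congrArg (·.factorization p) h
  omega

end Nat

/-- For any assignment X of positive integers to primes, the set
T = {n ≥ 2 : p ∣ n → p^{X(p)} ∥ n} contains no 3-term geometric progression with
rational ratio r > 1, i.e. no triple a < b < c in T with b² = a·c. -/
theorem Tset_gpf (X : {p : ℕ // p.Prime} → ℕ+) :
    ∀ a ∈ {n : ℕ | 2 ≤ n ∧ ∀ p : ℕ, (hp : p.Prime) → p ∣ n →
        p ^ (X ⟨p, hp⟩ : ℕ) ∣ n ∧ ¬ p ^ ((X ⟨p, hp⟩ : ℕ) + 1) ∣ n},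
      ∀ b ∈ {n : ℕ | 2 ≤ n ∧ ∀ p : ℕ, (hp : p.Prime) → p ∣ n →
        p ^ (X ⟨p, hp⟩ : ℕ) ∣ n ∧ ¬ p ^ ((X ⟨p, hp⟩ : ℕ) + 1) ∣ n},
      ∀ c ∈ {n : ℕ | 2 ≤ n ∧ ∀ p : ℕ, (hp : p.Prime) → p ∣ n →
        p ^ (X ⟨p, hp⟩ : ℕ) ∣ n ∧ ¬ p ^ ((X ⟨p, hp⟩ : ℕ) + 1) ∣ n},
      a < b → b < c → b * b ≠ a * c := by
  rintro a ⟨ha2, hA⟩ b ⟨-, hB⟩ c ⟨-, hC⟩ hab hbc h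
  have ha : a ≠ 0 := by omega
  have hb : b ≠ 0 := by omega
  have hc : c ≠ 0 := by omega
  refine hab.ne (Nat.eq_of_factorization_eq ha hb fun p => ?_)
  by_cases hp : p.Prime
  · exact Nat.factorization_eq_of_mul_self_eq_mul ha hb hc h
      (Nat.factorization_eq_zero_or_eq_of_exact_pow hp ha (hA p hp))
      (Nat.factorization_eq_zero_or_eq_of_exact_pow hp hb (hB p hp))
      (Nat.factorization_eq_zero_or_eq_of_exact_pow hp hc (hC p hp))
  · simp only [Nat.factorization_eq_zero_of_not_prime _ hp]
end

section
/- For any constants c₂ > 0 and sufficiently large y, the sum over primes p with √y ≤ p < y/2 of (c₂ y / (p log(y/p)))² is O(y^{3/2} / (log y)³). -/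
/-!
Split the primes at `y ^ (3/4)`. Below it `log (y / p) ≥ log y / 4`, and Chebyshev's bound
(from `primorial n ≤ 4 ^ n`, at most `2 m log 4 / log m` primes lie in `(m, 2m]`), summed over
dyadic blocks, gives `∑_{p ≥ √y} p⁻² ≤ 16 log 4 / (√y log √y)`; this part contributes
`O(y ^ (3/2) / (log y) ^ 3)`. Above it `log (y / p) ≥ log 2` and `∑_{n > y ^ (3/4)} n⁻² ≤ 2 y ^ (-3/4)`,
so this part is `O(y ^ (5/4))`, which is smaller since `(log y) ^ 3 ≤ y ^ (1/4)` eventually.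
-/

open Real Finset Filter

theorem card_primes_Ioc_two_mul_mul_log_le (m : ℕ) :
    (#{p ∈ Ioc m (2 * m) | p.Prime} : ℝ) * log m ≤ 2 * m * log 4 := by
  rcases Nat.eq_zero_or_pos m with rfl | hm
  · simp
  have hpow : m ^ #{p ∈ Ioc m (2 * m) | p.Prime} ≤ 4 ^ (2 * m) :=
    calc m ^ #{p ∈ Ioc m (2 * m) | p.Prime}
        = ∏ p ∈ Ioc m (2 * m) with p.Prime, m := (prod_const m).symm
      _ ≤ ∏ p ∈ Ioc m (2 * m) with p.Prime, p :=
        prod_le_prod' fun p hp => (mem_Ioc.1 (mem_filter.1 hp).1).1.le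
      _ ≤ primorial (2 * m) := by
        refine prod_le_prod_of_subset_of_one_le' (fun p hp => ?_)
          fun p hp _ => (mem_filter.1 hp).2.one_lt.le
        simp only [mem_filter, mem_Ioc, mem_range] at hp ⊢
        exact ⟨Nat.lt_succ_of_le hp.1.2, hp.2⟩
      _ ≤ 4 ^ (2 * m) := primorial_le_four_pow _
  have := log_le_log (by positivity) (show (m : ℝ) ^ _ ≤ (4 : ℝ) ^ (2 * m) by exact_mod_cast hpow)
  simpa [log_pow] using this

theorem sum_inv_sq_primes_Ioc_two_mul_le (m : ℕ) (hm : 2 ≤ m) :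
    ∑ p ∈ Ioc m (2 * m) with p.Prime, ((p : ℝ) ^ 2)⁻¹ ≤ 2 * log 4 / (m * log m) := by
  have hm0 : (0 : ℝ) < m := by positivity
  have hlogm : 0 < log m := log_pos (by exact_mod_cast hm)
  have hcard := card_primes_Ioc_two_mul_mul_log_le m
  calc ∑ p ∈ Ioc m (2 * m) with p.Prime, ((p : ℝ) ^ 2)⁻¹
      ≤ #{p ∈ Ioc m (2 * m) | p.Prime} • ((m : ℝ) ^ 2)⁻¹ := by
        refine sum_le_card_nsmul _ _ _ fun p hp => ?_
        have hmp : (m : ℝ) ≤ p := by exact_mod_cast (mem_Ioc.1 (mem_filter.1 hp).1).1.le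
        gcongr
    _ = #{p ∈ Ioc m (2 * m) | p.Prime} * log m / (m ^ 2 * log m) := by
        rw [nsmul_eq_mul]; field_simp
    _ ≤ 2 * m * log 4 / (m ^ 2 * log m) := by gcongr
    _ = 2 * log 4 / (m * log m) := by field_simp

theorem sum_inv_sq_primes_Ioc_two_pow_mul_le (K m : ℕ) (hm : 2 ≤ m) :
    ∑ p ∈ Ioc m (2 ^ K * m) with p.Prime, ((p : ℝ) ^ 2)⁻¹ ≤ 4 * log 4 / (m * log m) := by
  induction K generalizing m with
  | zero => rw [pow_zero, one_mul, Ioc_self, filter_empty, sum_empty]; positivity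
  | succ K ih =>
    have hm0 : (0 : ℝ) < m := by positivity
    have hlogm : 0 < log m := log_pos (by exact_mod_cast hm)
    have h2m : 2 ≤ 2 * m := by omega
    rw [show 2 ^ (K + 1) * m = 2 ^ K * (2 * m) by ring,
      ← Ioc_union_Ioc_eq_Ioc (by omega) (Nat.le_mul_of_pos_left _ (by positivity)), filter_union,
      sum_union (disjoint_filter_filter (Ioc_disjoint_Ioc_of_le le_rfl))]
    have hlog : log m ≤ log (2 * m : ℕ) := log_le_log hm0 (by push_cast; linarith)
    calc _ ≤ 2 * log 4 / (m * log m) + 4 * log 4 / ((2 * m : ℕ) * log (2 * m : ℕ)) :=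
          add_le_add (sum_inv_sq_primes_Ioc_two_mul_le m hm) (ih _ h2m)
      _ ≤ 2 * log 4 / (m * log m) + 4 * log 4 / ((2 * m : ℕ) * log m) := by gcongr
      _ = 4 * log 4 / (m * log m) := by push_cast; field_simp; ring

theorem sum_inv_sq_primes_le_of_forall_le (s : ℝ) (hs : 4 ≤ s) (A : Finset ℕ)
    (hA : ∀ p ∈ A, p.Prime ∧ s ≤ p) :
    ∑ p ∈ A, ((p : ℝ) ^ 2)⁻¹ ≤ 16 * log 4 / (s * log s) := by
  set m := ⌈s⌉₊ - 1
  have hm_succ : (m : ℝ) + 1 = ⌈s⌉₊ := by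
    exact_mod_cast Nat.sub_add_cancel (Nat.one_le_ceil_iff.2 (by linarith))
  have hm_lt : (m : ℝ) < s := by linarith [Nat.ceil_lt_add_one (by linarith : 0 ≤ s)]
  have hm_ge : s / 2 ≤ m := by linarith [Nat.le_ceil s]
  have hm2 : 2 ≤ m := by exact_mod_cast (show (2 : ℝ) ≤ m by linarith)
  have hlog : log s / 2 ≤ log m := by
    have h4 : log 4 ≤ log s := log_le_log (by norm_num) hs
    have h2 : log 4 = 2 * log 2 := by
      rw [show (4 : ℝ) = 2 ^ 2 by norm_num, log_pow]; norm_num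
    have := log_le_log (by linarith) hm_ge
    rw [log_div (by linarith) (by norm_num)] at this
    linarith
  obtain ⟨n, hn⟩ := A.exists_nat_subset_range
  have hsub : A ⊆ {p ∈ Ioc m (2 ^ n * m) | p.Prime} := fun p hp => by
    have hpn : p < n := mem_range.1 (hn hp)
    have hmp : m < p := by exact_mod_cast hm_lt.trans_le (hA p hp).2
    have : n < 2 ^ n := Nat.lt_two_pow_self
    exact mem_filter.2 ⟨mem_Ioc.2 ⟨hmp, by nlinarith⟩, (hA p hp).1⟩
  have hlogs : 0 < log s := log_pos (by linarith)
  calc ∑ p ∈ A, ((p : ℝ) ^ 2)⁻¹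
      ≤ ∑ p ∈ Ioc m (2 ^ n * m) with p.Prime, ((p : ℝ) ^ 2)⁻¹ :=
        sum_le_sum_of_subset_of_nonneg hsub fun _ _ _ => by positivity
    _ ≤ 4 * log 4 / (m * log m) := sum_inv_sq_primes_Ioc_two_pow_mul_le n m hm2
    _ ≤ 4 * log 4 / (s / 2 * (log s / 2)) := by gcongr
    _ = 16 * log 4 / (s * log s) := by field_simp; ring

theorem sum_inv_sq_le_of_forall_lt (t : ℝ) (ht : 1 ≤ t) (A : Finset ℕ) (hA : ∀ n ∈ A, t < n) :
    ∑ n ∈ A, ((n : ℝ) ^ 2)⁻¹ ≤ 2 / t := by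
  set k := ⌊t⌋₊
  have hk1 : 1 ≤ k := Nat.le_floor (by simpa using ht)
  have hk : t / 2 ≤ k := by
    have : (1 : ℝ) ≤ k := by exact_mod_cast hk1
    linarith [Nat.lt_floor_add_one t]
  obtain ⟨N, hN⟩ := A.exists_nat_subset_range
  have hsub : A ⊆ Ioc k (k + N) := fun n hn => by
    have : k < n := by exact_mod_cast (Nat.floor_le (by linarith)).trans_lt (hA n hn)
    exact mem_Ioc.2 ⟨this, by linarith [mem_range.1 (hN hn)]⟩
  calc ∑ n ∈ A, ((n : ℝ) ^ 2)⁻¹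
      ≤ ∑ n ∈ Ioc k (k + N), ((n : ℝ) ^ 2)⁻¹ :=
        sum_le_sum_of_subset_of_nonneg hsub fun _ _ _ => by positivity
    _ ≤ (k : ℝ)⁻¹ - ((k + N : ℕ) : ℝ)⁻¹ := sum_Ioc_inv_sq_le_sub (by omega) (by omega)
    _ ≤ (k : ℝ)⁻¹ := sub_le_self _ (by positivity)
    _ ≤ 2 / t := by
        rw [inv_eq_one_div, div_le_div_iff₀ (by positivity) (by positivity)]; linarith

theorem sq_div_mul_le_sq_div_mul_inv_sq {a p L ℓ : ℝ} (hp : 0 < p) (hL : 0 < L) (hLℓ : L ≤ ℓ) :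
    (a / (p * ℓ)) ^ 2 ≤ (a / L) ^ 2 * (p ^ 2)⁻¹ :=
  calc (a / (p * ℓ)) ^ 2 = a ^ 2 / (p * ℓ) ^ 2 := div_pow _ _ _
    _ ≤ a ^ 2 / (p * L) ^ 2 := by gcongr
    _ = (a / L) ^ 2 * (p ^ 2)⁻¹ := by field_simp

theorem eventually_log_pow_le_rpow (n : ℕ) {ε : ℝ} (hε : 0 < ε) :
    ∀ᶠ x in atTop, log x ^ n ≤ x ^ ε := by
  filter_upwards [(isLittleO_log_rpow_rpow_atTop n hε).bound one_pos,
    eventually_ge_atTop 1] with x hx hx1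
  rwa [norm_of_nonneg (rpow_nonneg (log_nonneg hx1) _), rpow_natCast,
    norm_of_nonneg (rpow_nonneg (by linarith) _), one_mul] at hx

theorem sum_sq_div_mul_log_le_of_le_rpow (c y : ℝ) (hy : 16 ≤ y) (S : Finset ℕ)
    (hS : ∀ p ∈ S, p.Prime ∧ √y ≤ p ∧ (p : ℝ) ≤ y ^ (3 / 4 : ℝ)) :
    ∑ p ∈ S, (c * y / (p * log (y / p))) ^ 2
      ≤ 512 * log 4 * c ^ 2 * y ^ (3 / 2 : ℝ) / log y ^ 3 := by
  have hy0 : 0 < y := by linarith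
  have hlogy : 0 < log y := log_pos (by linarith)
  have hsqrt : 4 ≤ √y := (le_sqrt' (by norm_num)).2 (by linarith)
  have hlog_div : ∀ p ∈ S, log y / 4 ≤ log (y / p) := fun p hp => by
    have hp0 : (0 : ℝ) < p := by linarith [(hS p hp).2.1]
    have : y ^ (1 / 4 : ℝ) ≤ y / p := by
      rw [le_div_iff₀ hp0]
      calc y ^ (1 / 4 : ℝ) * p ≤ y ^ (1 / 4 : ℝ) * y ^ (3 / 4 : ℝ) := by gcongr; exact (hS p hp).2.2
        _ = y := by rw [← rpow_add hy0]; norm_num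
    have := log_le_log (by positivity) this
    rw [log_rpow hy0] at this
    linarith
  calc ∑ p ∈ S, (c * y / (p * log (y / p))) ^ 2
      ≤ ∑ p ∈ S, (c * y / (log y / 4)) ^ 2 * ((p : ℝ) ^ 2)⁻¹ :=
        sum_le_sum fun p hp => sq_div_mul_le_sq_div_mul_inv_sq
          (by linarith [(hS p hp).2.1]) (by positivity) (hlog_div p hp)
    _ = (c * y / (log y / 4)) ^ 2 * ∑ p ∈ S, ((p : ℝ) ^ 2)⁻¹ := (mul_sum _ _ _).symm
    _ ≤ (c * y / (log y / 4)) ^ 2 * (16 * log 4 / (√y * log √y)) := by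
        gcongr
        exact sum_inv_sq_primes_le_of_forall_le _ hsqrt S fun p hp => ⟨(hS p hp).1, (hS p hp).2.1⟩
    _ = 512 * log 4 * c ^ 2 * y ^ (3 / 2 : ℝ) / log y ^ 3 := by
        rw [log_sqrt hy0.le, show (3 / 2 : ℝ) = 1 + 1 / 2 by norm_num, rpow_add hy0, rpow_one,
          ← sqrt_eq_rpow]
        field_simp
        rw [sq_sqrt hy0.le]
        ring

theorem sum_sq_div_mul_log_le_of_rpow_lt (c y : ℝ) (hy : 1 ≤ y) (S : Finset ℕ)
    (hS : ∀ p ∈ S, y ^ (3 / 4 : ℝ) < p ∧ (p : ℝ) < y / 2) :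
    ∑ p ∈ S, (c * y / (p * log (y / p))) ^ 2 ≤ 2 * c ^ 2 / log 2 ^ 2 * y ^ (5 / 4 : ℝ) := by
  have hy0 : 0 < y := by linarith
  have hy34 : 1 ≤ y ^ (3 / 4 : ℝ) := one_le_rpow hy (by norm_num)
  have hlog_div : ∀ p ∈ S, log 2 ≤ log (y / p) := fun p hp => by
    have hp0 : (0 : ℝ) < p := by linarith [(hS p hp).1]
    exact log_le_log (by norm_num) (by rw [le_div_iff₀ hp0]; linarith [(hS p hp).2])
  calc ∑ p ∈ S, (c * y / (p * log (y / p))) ^ 2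
      ≤ ∑ p ∈ S, (c * y / log 2) ^ 2 * ((p : ℝ) ^ 2)⁻¹ :=
        sum_le_sum fun p hp => sq_div_mul_le_sq_div_mul_inv_sq
          (by linarith [(hS p hp).1]) (log_pos one_lt_two) (hlog_div p hp)
    _ = (c * y / log 2) ^ 2 * ∑ p ∈ S, ((p : ℝ) ^ 2)⁻¹ := (mul_sum _ _ _).symm
    _ ≤ (c * y / log 2) ^ 2 * (2 / y ^ (3 / 4 : ℝ)) := by
        gcongr
        exact sum_inv_sq_le_of_forall_lt _ hy34 S fun p hp => (hS p hp).1
    _ = 2 * c ^ 2 / log 2 ^ 2 * y ^ (5 / 4 : ℝ) := by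
        have : y ^ (5 / 4 : ℝ) * y ^ (3 / 4 : ℝ) = y ^ 2 := by
          rw [← rpow_add hy0]; norm_num
        field_simp
        linear_combination (-c ^ 2) * this

/-- For any c₂ > 0 and sufficiently large y,
∑_{√y ≤ p < y/2, p prime} (c₂ y / (p log(y/p)))² = O(y^{3/2}/(log y)³). -/
theorem sum_over_primes_bound (c₂ : ℝ) (hc₂ : 0 < c₂) :
    ∃ C : ℝ, 0 < C ∧ ∃ Y : ℝ, ∀ y : ℝ, Y ≤ y →
      ∑ p ∈ (Finset.range ⌈y⌉₊).filter
          (fun p : ℕ => p.Prime ∧ Real.sqrt y ≤ (p : ℝ) ∧ (p : ℝ) < y / 2),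
        (c₂ * y / (p * log (y / p))) ^ 2 ≤ C * y ^ ((3 : ℝ) / 2) / (log y) ^ 3 := by
  refine ⟨c₂ ^ 2 * (512 * log 4 + 2 / log 2 ^ 2), by positivity, ?_⟩
  obtain ⟨Y, hY⟩ := eventually_atTop.1 (eventually_log_pow_le_rpow 3 (by norm_num : (0 : ℝ) < 1 / 4))
  refine ⟨max Y 16, fun y hy => ?_⟩
  have hy16 : 16 ≤ y := le_of_max_le_right hy
  have hy0 : 0 < y := by linarith
  set S := (Finset.range ⌈y⌉₊).filter
    (fun p : ℕ => p.Prime ∧ Real.sqrt y ≤ (p : ℝ) ∧ (p : ℝ) < y / 2)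
  have h_small := sum_sq_div_mul_log_le_of_le_rpow c₂ y hy16 {p ∈ S | (p : ℝ) ≤ y ^ (3 / 4 : ℝ)}
    fun p hp => by simp only [S, mem_filter] at hp; exact ⟨hp.1.2.1, hp.1.2.2.1, hp.2⟩
  have h_large := sum_sq_div_mul_log_le_of_rpow_lt c₂ y (by linarith)
    {p ∈ S | ¬(p : ℝ) ≤ y ^ (3 / 4 : ℝ)}
    fun p hp => by simp only [S, mem_filter, not_le] at hp; exact ⟨hp.2, hp.1.2.2.2⟩
  have h_rpow : y ^ (5 / 4 : ℝ) ≤ y ^ (3 / 2 : ℝ) / log y ^ 3 := by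
    have hlog : 0 < log y := log_pos (by linarith)
    rw [le_div_iff₀ (by positivity)]
    calc y ^ (5 / 4 : ℝ) * log y ^ 3 ≤ y ^ (5 / 4 : ℝ) * y ^ (1 / 4 : ℝ) := by
          gcongr; exact hY y (le_of_max_le_left hy)
      _ = y ^ (3 / 2 : ℝ) := by rw [← rpow_add hy0]; norm_num
  rw [← sum_filter_add_sum_filter_not S (fun p : ℕ => (p : ℝ) ≤ y ^ (3 / 4 : ℝ))]
  calc _ ≤ 512 * log 4 * c₂ ^ 2 * y ^ (3 / 2 : ℝ) / log y ^ 3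
        + 2 * c₂ ^ 2 / log 2 ^ 2 * y ^ (5 / 4 : ℝ) := add_le_add h_small h_large
    _ ≤ 512 * log 4 * c₂ ^ 2 * y ^ (3 / 2 : ℝ) / log y ^ 3
        + 2 * c₂ ^ 2 / log 2 ^ 2 * (y ^ (3 / 2 : ℝ) / log y ^ 3) := by gcongr
    _ = _ := by ring
end
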